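/- Let (X,d) be a separable metric space and ν a Borel probability measure on X. Then: the upper packing dimension of ν equals inf{PD_d(B) : B Borel, ν(B)=1}; the lower packing dimension of ν equals inf{PD_d(B) : B Borel, ν(B)>0}; the upper Hausdorff dimension of ν equals inf{HD_d(B) : B Borel, ν(B)=1}; and the lower Hausdorff dimension of ν equals inf{HD_d(B) : B Borel, ν(B)>0}. -/

import Mathlib

/-!
The four identities have one shape. Write `f` for a local dimension and `D` for the matching
set dimension; both inequalities reduce to two facts about a level `t`.

*Lower bound (mass distribution).* If `t < f` on a set `A` of positive measure then
`D A ≥ t`. For the lower local dimension, `ν (ball y r) ≤ r ^ t` at all small scales on a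
positive-measure part of `A`, and every cover by balls then has `∑ rᵢ ^ t ≳ ν A`. For the upper
local dimension, `ν (ball y r) < r ^ t` only at arbitrarily small scales, and a Vitali
`5r`-subfamily of such balls is a packing with `∑ rᵢ ^ t ≳ ν A`.

*Upper bound.* The points where `ν (closedBall y q) ≥ q ^ t` for all small (respectively,
arbitrarily small) radii form a Borel set containing almost every point with `f < t`.
Disjoint balls centred there satisfy `∑ rᵢ ^ t ≲ 1`, hence `∑ rᵢ ^ (t + δ) ≲ η ^ δ` for radii at
most `η`. This kills the packing pre-measure, and through a Vitali cover the Hausdorff content,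
in every dimension above `t`.

Separability makes disjoint families of balls countable, and puts almost every point in the
support of `ν`.
-/

open Filter Metric Set MeasureTheory Topology
open scoped ENNReal NNReal

noncomputable section

namespace Paper

variable {X : Type*} [MetricSpace X]

/-- Hausdorff `α`-content at scale `η`, using countable coverings by metric balls of radii
at most `η`. -/
def hContent (α η : ℝ) (B : Set X) : ℝ≥0∞ :=
  ⨅ (c : ℕ → X) (r : ℕ → ℝ) (_ : ∀ i, 0 < r i ∧ r i ≤ η)
    (_ : B ⊆ ⋃ i, Metric.ball (c i) (r i)),
    ∑' i, ENNReal.ofReal (r i ^ α)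

/-- The Hausdorff `α`-measure (ball based, following the paper). -/
def hMeasure (α : ℝ) (B : Set X) : ℝ≥0∞ :=
  ⨆ (η : ℝ) (_ : 0 < η), hContent α η B

/-- The Hausdorff dimension `HD_d(B)`: the critical exponent of `α ↦ hMeasure α B`. -/
def hDim (B : Set X) : EReal :=
  sInf {a : EReal | ∃ α : ℝ, a = (α : EReal) ∧ 0 ≤ α ∧ hMeasure α B = 0}

/-- The packing `α`-pre-measure `P^α_d(B)`, built from countable families of disjoint balls
with centers in `B` and radii at most `η`. -/
def packPre (α : ℝ) (B : Set X) : ℝ≥0∞ :=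
  ⨅ (η : ℝ) (_ : 0 < η),
    ⨆ (I : Set ℕ) (c : ℕ → X) (r : ℕ → ℝ)
      (_ : ∀ i ∈ I, c i ∈ B ∧ 0 < r i ∧ r i ≤ η)
      (_ : I.PairwiseDisjoint fun i => Metric.ball (c i) (r i)),
      ∑' i : I, ENNReal.ofReal (r (i : ℕ) ^ α)

/-- The packing `α`-measure `𝑃̂^α_d(B)`, obtained from the pre-measure by countable coverings. -/
def packMeasure (α : ℝ) (B : Set X) : ℝ≥0∞ :=
  ⨅ (C : ℕ → Set X) (_ : B ⊆ ⋃ k, C k), ∑' k, packPre α (C k)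

/-- The packing dimension `PD_d(B)`: the critical exponent of `α ↦ packMeasure α B`. -/
def packDim (B : Set X) : EReal :=
  sInf {a : EReal | ∃ α : ℝ, a = (α : EReal) ∧ 0 ≤ α ∧ packMeasure α B = 0}

/-- The lower local dimension `liminf_{r→0} log ν(B(y,r))/log r` of `ν` at `y`. -/
def locLower [MeasurableSpace X] (ν : Measure X) (y : X) : EReal :=
  liminf (fun r : ℝ => ((Real.log (ν (Metric.ball y r)).toReal / Real.log r : ℝ) : EReal))
    (nhdsWithin 0 (Set.Ioi 0))

/-- The upper local dimension `limsup_{r→0} log ν(B(y,r))/log r` of `ν` at `y`. -/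
def locUpper [MeasurableSpace X] (ν : Measure X) (y : X) : EReal :=
  limsup (fun r : ℝ => ((Real.log (ν (Metric.ball y r)).toReal / Real.log r : ℝ) : EReal))
    (nhdsWithin 0 (Set.Ioi 0))

end Paper

namespace Paper

def critExp (P : ℝ → Prop) : EReal :=
  sInf {a : EReal | ∃ α : ℝ, a = α ∧ 0 ≤ α ∧ P α}

lemma le_critExp {P : ℝ → Prop} {t : ℝ} (h : ∀ α, 0 ≤ α → P α → t ≤ α) :
    (t : EReal) ≤ critExp P :=
  le_sInf fun _ ⟨α, hα, hα0, hP⟩ => hα ▸ EReal.coe_le_coe_iff.2 (h α hα0 hP)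

lemma critExp_le {P : ℝ → Prop} {t : ℝ} (ht : 0 ≤ t) (h : ∀ s, t < s → P s) :
    critExp P ≤ t :=
  EReal.le_of_forall_lt_iff_le.1 fun s hs =>
    sInf_le ⟨s, rfl, ht.trans (EReal.coe_lt_coe_iff.1 hs).le, h s (EReal.coe_lt_coe_iff.1 hs)⟩

lemma hDim_eq_critExp {X : Type*} [MetricSpace X] (B : Set X) :
    hDim B = critExp fun α => hMeasure α B = 0 := rfl

lemma packDim_eq_critExp {X : Type*} [MetricSpace X] (B : Set X) :
    packDim B = critExp fun α => packMeasure α B = 0 := rfl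

section EssentialBounds

variable {X : Type*} [MeasurableSpace X] {ν : Measure X} {f : X → EReal} {D : Set X → EReal}

theorem essSup_eq_iInf_of_measure_eq_one [IsProbabilityMeasure ν] (hf : ∀ y, 0 ≤ f y)
    (hlow : ∀ (t : ℝ) (B : Set X), 0 < ν {y ∈ B | (t : EReal) < f y} → (t : EReal) ≤ D B)
    (hup : ∀ t : ℝ, 0 < t → ∃ E, MeasurableSet E ∧ D E ≤ t ∧ ∀ᵐ y ∂ν, f y < t → y ∈ E) :
    essSup f ν = ⨅ (B : Set X) (_ : MeasurableSet B) (_ : ν B = 1), D B := by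
  refine le_antisymm (le_iInf₂ fun B hB => le_iInf fun hB1 => ?_) ?_
  · refine EReal.ge_of_forall_gt_iff_ge.1 fun t ht => hlow t B ?_
    have hpos : ν {y | (t : EReal) < f y} ≠ 0 := fun h0 =>
      ht.not_ge (essSup_le_of_ae_le _ (ae_iff.2 (by simpa only [not_le] using h0)))
    rwa [ofPred_and, ofPred_mem_eq, inter_comm,
      measure_inter_conull ((prob_compl_eq_zero_iff hB).2 hB1), pos_iff_ne_zero]
  · refine EReal.le_of_forall_lt_iff_le.1 fun t ht => ?_
    have ht0 : (0 : EReal) < t :=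
      ((essSup_const' 0).symm.le.trans (essSup_mono_ae (Eventually.of_forall hf))).trans_lt ht
    obtain ⟨E, hE, hDE, hfE⟩ := hup t (EReal.coe_pos.1 ht0)
    have hE1 : ν E = 1 := by
      rw [← prob_compl_eq_zero_iff hE, ← mem_ae_iff]
      filter_upwards [ae_le_essSup (μ := ν) (f := f), hfE] with y hy hyE
      exact hyE (hy.trans_lt ht)
    exact (iInf₂_le_of_le E hE (iInf_le _ hE1)).trans hDE

theorem essInf_eq_iInf_of_measure_pos (hf : ∀ y, 0 ≤ f y)
    (hlow : ∀ (t : ℝ) (B : Set X), 0 < ν {y ∈ B | (t : EReal) < f y} → (t : EReal) ≤ D B)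
    (hup : ∀ t : ℝ, 0 < t → ∃ E, MeasurableSet E ∧ D E ≤ t ∧ ∀ᵐ y ∂ν, f y < t → y ∈ E) :
    essInf f ν = ⨅ (B : Set X) (_ : MeasurableSet B) (_ : 0 < ν B), D B := by
  refine le_antisymm (le_iInf₂ fun B hB => le_iInf fun hB0 => ?_) ?_
  · refine EReal.ge_of_forall_gt_iff_ge.1 fun t ht => hlow t B ?_
    rwa [ofPred_and, ofPred_mem_eq, measure_inter_conull]
    simpa only [ae_iff, compl_ofPred, not_lt] using ae_lt_of_lt_essInf ht
  · refine EReal.le_of_forall_lt_iff_le.1 fun t ht => ?_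
    have ht0 : (0 : EReal) < t :=
      (le_essInf_of_ae_le _ (Eventually.of_forall hf)).trans_lt ht
    obtain ⟨E, hE, hDE, hfE⟩ := hup t (EReal.coe_pos.1 ht0)
    have hE0 : 0 < ν E := by
      refine pos_iff_ne_zero.2 fun h0 => ht.not_ge (le_essInf_of_ae_le _ ?_)
      filter_upwards [measure_eq_zero_iff_ae_notMem.1 h0, hfE] with y hy hyE
      exact not_lt.1 fun h => hy (hyE h)
    exact (iInf₂_le_of_le E hE (iInf_le _ hE0)).trans hDE

end EssentialBounds

lemma log_div_log_lt_iff {m r t : ℝ} (hm : 0 < m) (hr : r ∈ Ioo (0 : ℝ) 1) :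
    Real.log m / Real.log r < t ↔ r ^ t < m := by
  rw [div_lt_iff_of_neg (Real.log_neg hr.1 hr.2), Real.rpow_def_of_pos hr.1, mul_comm,
    Real.lt_log_iff_exp_lt hm]

lemma lt_log_div_log_iff {m r t : ℝ} (hm : 0 < m) (hr : r ∈ Ioo (0 : ℝ) 1) :
    t < Real.log m / Real.log r ↔ m < r ^ t := by
  rw [lt_div_iff_of_neg (Real.log_neg hr.1 hr.2), Real.rpow_def_of_pos hr.1, mul_comm,
    Real.log_lt_iff_lt_exp hm]

lemma eq_zero_of_eventually_le_mul_rpow {x C : ℝ≥0∞} (hC : C ≠ ⊤) {δ : ℝ} (hδ : 0 < δ)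
    (h : ∀ᶠ η in 𝓝[>] (0 : ℝ), x ≤ C * ENNReal.ofReal (η ^ δ)) : x = 0 := by
  have hlim : Tendsto (fun η : ℝ => C * ENNReal.ofReal (η ^ δ)) (𝓝[>] 0) (𝓝 0) := by
    have h0 : Tendsto (fun η : ℝ => η ^ δ) (𝓝[>] 0) (𝓝 0) := by
      simpa [Real.zero_rpow hδ.ne'] using
        (Real.continuousAt_rpow_const 0 δ (Or.inr hδ.le)).tendsto.mono_left nhdsWithin_le_nhds
    simpa using ENNReal.Tendsto.const_mul (ENNReal.tendsto_ofReal h0) (Or.inr hC)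
  exact nonpos_iff_eq_zero.1 (ge_of_tendsto hlim h)

lemma ofReal_rpow_ne_zero {a : ℝ} (ha : 0 < a) (t : ℝ) : ENNReal.ofReal (a ^ t) ≠ 0 :=
  (ENNReal.ofReal_pos.2 (Real.rpow_pos_of_pos ha t)).ne'

lemma ofReal_mul_rpow {a r : ℝ} (ha : 0 ≤ a) (hr : 0 ≤ r) (t : ℝ) :
    ENNReal.ofReal ((a * r) ^ t) = ENNReal.ofReal (a ^ t) * ENNReal.ofReal (r ^ t) := by
  rw [Real.mul_rpow ha hr, ENNReal.ofReal_mul (Real.rpow_nonneg ha t)]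

lemma tsum_ofReal_rpow_le {X ι : Type*} [MeasurableSpace X] (ν : Measure X) [Countable ι]
    {I : Set ι} {s : ι → Set X} (hs : ∀ i, MeasurableSet (s i)) (hd : I.PairwiseDisjoint s)
    {r : ι → ℝ} {C : ℝ≥0∞} {t δ η : ℝ} (hδ : 0 ≤ δ) (hr : ∀ i ∈ I, 0 < r i ∧ r i ≤ η)
    (hmass : ∀ i ∈ I, ENNReal.ofReal (r i ^ t) ≤ C * ν (s i)) :
    ∑' i : I, ENNReal.ofReal (r i ^ (t + δ)) ≤ C * ν univ * ENNReal.ofReal (η ^ δ) := by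
  have hterm : ∀ i : I, ENNReal.ofReal (r i ^ (t + δ)) ≤
      C * ENNReal.ofReal (η ^ δ) * ν (s i) := fun ⟨i, hi⟩ => by
    rw [Real.rpow_add (hr i hi).1, ENNReal.ofReal_mul (Real.rpow_nonneg (hr i hi).1.le _),
      mul_right_comm]
    exact mul_le_mul' (hmass i hi) (ENNReal.ofReal_le_ofReal
      (Real.rpow_le_rpow (hr i hi).1.le (hr i hi).2 hδ))
  calc ∑' i : I, ENNReal.ofReal (r i ^ (t + δ))
      ≤ ∑' i : I, C * ENNReal.ofReal (η ^ δ) * ν (s i) := ENNReal.tsum_le_tsum hterm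
    _ = C * ENNReal.ofReal (η ^ δ) * ν (⋃ i ∈ I, s i) := by
      rw [ENNReal.tsum_mul_left, measure_biUnion I.to_countable hd fun i _ => hs i]
    _ ≤ C * ν univ * ENNReal.ofReal (η ^ δ) := by
      rw [mul_right_comm]
      gcongr
      exact subset_univ _

variable {X : Type*} [MetricSpace X]

lemma hContent_le {α η : ℝ} {B : Set X} (c : ℕ → X) (r : ℕ → ℝ)
    (hr : ∀ i, 0 < r i ∧ r i ≤ η) (hB : B ⊆ ⋃ i, ball (c i) (r i)) :
    hContent α η B ≤ ∑' i, ENNReal.ofReal (r i ^ α) :=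
  iInf_le_of_le c <| iInf_le_of_le r <| iInf_le_of_le hr <| iInf_le _ hB

lemma le_hContent {α η : ℝ} {B : Set X} {m : ℝ≥0∞}
    (h : ∀ (c : ℕ → X) (r : ℕ → ℝ), (∀ i, 0 < r i ∧ r i ≤ η) →
      B ⊆ ⋃ i, ball (c i) (r i) → m ≤ ∑' i, ENNReal.ofReal (r i ^ α)) :
    m ≤ hContent α η B :=
  le_iInf fun c => le_iInf fun r => le_iInf fun hr => le_iInf fun hB => h c r hr hB

lemma hContent_mono {α η : ℝ} {A B : Set X} (h : A ⊆ B) : hContent α η A ≤ hContent α η B :=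
  le_hContent fun c r hr hB => hContent_le c r hr (h.trans hB)

lemma hContent_anti {α η η' : ℝ} (hη : η ≤ η') (B : Set X) :
    hContent α η' B ≤ hContent α η B :=
  le_hContent fun c r hr hB => hContent_le c r (fun i => ⟨(hr i).1, (hr i).2.trans hη⟩) hB

lemma hContent_le_hMeasure (α : ℝ) {η : ℝ} (hη : 0 < η) (B : Set X) :
    hContent α η B ≤ hMeasure α B :=
  le_iSup₂ (f := fun η (_ : 0 < η) => hContent α η B) η hη

lemma hMeasure_mono {α : ℝ} {A B : Set X} (h : A ⊆ B) : hMeasure α A ≤ hMeasure α B :=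
  iSup₂_mono fun _ _ => hContent_mono h

/-- The indices outside `I` are filled with balls whose radii have `α`-th powers summing to
less than `ε`. -/
lemma hContent_le_tsum_add {α η ε : ℝ} (hα : 0 < α) (hη : 0 < η) (hε : 0 < ε) {B : Set X}
    {I : Set ℕ} (c : ℕ → X) (r : ℕ → ℝ) (hr : ∀ i ∈ I, 0 < r i ∧ r i ≤ η)
    (hB : B ⊆ ⋃ i ∈ I, ball (c i) (r i)) :
    hContent α η B ≤ ∑' i : I, ENNReal.ofReal (r i ^ α) + ENNReal.ofReal ε := by
  classical
  obtain ⟨w, hw0, hw⟩ := ENNReal.exists_pos_sum_of_countable (ENNReal.ofReal_pos.2 hε).ne' ℕ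
  set r' : ℕ → ℝ := fun i => if i ∈ I then r i else min η ((w i : ℝ) ^ α⁻¹)
  have hr' : ∀ i, 0 < r' i ∧ r' i ≤ η := fun i => by
    by_cases hi : i ∈ I
    · simpa [r', hi] using hr i hi
    · simp only [r', hi, if_false]
      exact ⟨lt_min hη (Real.rpow_pos_of_pos (NNReal.coe_pos.2 (hw0 i)) _), min_le_left _ _⟩
  have hfill : ∀ i ∉ I, ENNReal.ofReal (r' i ^ α) ≤ w i := fun i hi => by
    have h := Real.rpow_le_rpow (hr' i).1.le
      (show r' i ≤ (w i : ℝ) ^ α⁻¹ from (if_neg hi).trans_le (min_le_right _ _)) hα.le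
    rw [← Real.rpow_mul (NNReal.coe_nonneg _), inv_mul_cancel₀ hα.ne', Real.rpow_one] at h
    simpa using ENNReal.ofReal_le_ofReal h
  calc hContent α η B ≤ ∑' i, ENNReal.ofReal (r' i ^ α) :=
        hContent_le c r' hr' fun y hy => by
          obtain ⟨i, hi, hyi⟩ := mem_iUnion₂.1 (hB hy)
          exact mem_iUnion.2 ⟨i, by simpa [r', hi] using hyi⟩
    _ ≤ ∑' i, (I.indicator (fun i => ENNReal.ofReal (r i ^ α)) i + w i) :=
        ENNReal.tsum_le_tsum fun i => by
          by_cases hi : i ∈ I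
          · simp [r', hi]
          · simpa [hi] using hfill i hi
    _ = ∑' i : I, ENNReal.ofReal (r i ^ α) + ∑' i, (w i : ℝ≥0∞) := by
        rw [ENNReal.tsum_add, ← tsum_subtype]
    _ ≤ _ := add_le_add le_rfl hw.le

lemma packPre_le {α η : ℝ} (hη : 0 < η) {B : Set X} {m : ℝ≥0∞}
    (h : ∀ (I : Set ℕ) (c : ℕ → X) (r : ℕ → ℝ), (∀ i ∈ I, c i ∈ B ∧ 0 < r i ∧ r i ≤ η) →
      (I.PairwiseDisjoint fun i => ball (c i) (r i)) →
      ∑' i : I, ENNReal.ofReal (r i ^ α) ≤ m) :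
    packPre α B ≤ m :=
  iInf₂_le_of_le η hη <| iSup_le fun I => iSup_le fun c => iSup_le fun r =>
    iSup₂_le fun hr hd => h I c r hr hd

lemma le_packPre {α : ℝ} {B : Set X} {m : ℝ≥0∞}
    (h : ∀ η : ℝ, 0 < η → ∃ (I : Set ℕ) (c : ℕ → X) (r : ℕ → ℝ),
      (∀ i ∈ I, c i ∈ B ∧ 0 < r i ∧ r i ≤ η) ∧
      (I.PairwiseDisjoint fun i => ball (c i) (r i)) ∧
      m ≤ ∑' i : I, ENNReal.ofReal (r i ^ α)) :
    m ≤ packPre α B :=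
  le_iInf₂ fun η hη => by
    obtain ⟨I, c, r, hr, hd, hm⟩ := h η hη
    exact hm.trans <| le_iSup_of_le I <| le_iSup_of_le c <| le_iSup_of_le r <|
      le_iSup₂_of_le (f := fun _ _ => ∑' i : I, ENNReal.ofReal (r i ^ α)) hr hd le_rfl

lemma packPre_mono {α : ℝ} {A B : Set X} (h : A ⊆ B) : packPre α A ≤ packPre α B :=
  iInf₂_mono fun _ _ => iSup_mono fun _ => iSup_mono fun _ => iSup_mono fun _ =>
    iSup_le fun hr => le_iSup_of_le (fun i hi => ⟨h (hr i hi).1, (hr i hi).2⟩) le_rfl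

lemma packMeasure_le (α : ℝ) {B : Set X} (C : ℕ → Set X) (hC : B ⊆ ⋃ k, C k) :
    packMeasure α B ≤ ∑' k, packPre α (C k) :=
  iInf₂_le C hC

lemma le_packMeasure {α : ℝ} {B : Set X} {m : ℝ≥0∞}
    (h : ∀ C : ℕ → Set X, B ⊆ ⋃ k, C k → m ≤ ∑' k, packPre α (C k)) :
    m ≤ packMeasure α B :=
  le_iInf₂ h

lemma packMeasure_mono {α : ℝ} {A B : Set X} (h : A ⊆ B) :
    packMeasure α A ≤ packMeasure α B :=
  le_packMeasure fun C hC => packMeasure_le α C (h.trans hC)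

lemma exists_disjoint_closedBall_cover [TopologicalSpace.SeparableSpace X] [Nonempty X]
    {E : Set X} {η : ℝ} (P : X → ℝ → Prop) (hE : ∀ y ∈ E, ∃ ρ, 0 < ρ ∧ ρ ≤ η ∧ P y ρ) :
    ∃ (I : Set ℕ) (c : ℕ → X) (ρ : ℕ → ℝ),
      (∀ i ∈ I, c i ∈ E ∧ 0 < ρ i ∧ ρ i ≤ η ∧ P (c i) (ρ i)) ∧
      (I.PairwiseDisjoint fun i => closedBall (c i) (ρ i)) ∧
      E ⊆ ⋃ i ∈ I, closedBall (c i) (4 * ρ i) := by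
  set t : Set (X × ℝ) := {p | p.1 ∈ E ∧ 0 < p.2 ∧ p.2 ≤ η ∧ P p.1 p.2}
  obtain ⟨u, hut, hdisj, hcov⟩ :=
    Vitali.exists_disjoint_subfamily_covering_enlargement_closedBall t Prod.fst Prod.snd η
      (fun _ hp => hp.2.2.1) 4 (by norm_num)
  have hu : u.Countable := hdisj.countable_of_nonempty_interior fun p hp =>
    ⟨p.1, interior_maximal ball_subset_closedBall isOpen_ball (mem_ball_self (hut hp).2.1)⟩
  obtain ⟨e, he⟩ := countable_iff_exists_injOn.1 hu
  set g := Function.invFunOn e u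
  have hg : ∀ i ∈ e '' u, g i ∈ u ∧ e (g i) = i := fun i ⟨p, hp, hpi⟩ =>
    Function.invFunOn_pos ⟨p, hp, hpi⟩
  refine ⟨e '' u, fun i => (g i).1, fun i => (g i).2, fun i hi => hut (hg i hi).1,
    fun i hi j hj hij => hdisj (hg i hi).1 (hg j hj).1 fun h => hij ?_, fun y hy => ?_⟩
  · rw [← (hg i hi).2, ← (hg j hj).2, h]
  · obtain ⟨ρ, hρ0, hρη, hρ⟩ := hE y hy
    obtain ⟨p, hp, hsub⟩ := hcov (y, ρ) ⟨hy, hρ0, hρη, hρ⟩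
    refine mem_iUnion₂.2 ⟨e p, mem_image_of_mem e hp, ?_⟩
    have hgp : g (e p) = p := he.leftInvOn_invFunOn hp
    simp only [hgp]
    exact hsub (mem_closedBall_self hρ0.le)

section MeasureBounds

variable [MeasurableSpace X] (ν : Measure X)

section LocalDimension

variable [IsProbabilityMeasure ν] {y : X} {r t : ℝ}

lemma log_measure_ball_div_log_nonneg (hr : r ∈ Ioo (0 : ℝ) 1) :
    0 ≤ Real.log (ν (ball y r)).toReal / Real.log r :=
  div_nonneg_of_nonpos (Real.log_nonpos ENNReal.toReal_nonneg (ENNReal.toReal_le_of_le_ofReal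
    zero_le_one (by simpa using prob_le_one))) (Real.log_neg hr.1 hr.2).le

lemma locLower_nonneg (y : X) : 0 ≤ locLower ν y :=
  le_liminf_of_le (by isBoundedDefault) <| by
    filter_upwards [Ioo_mem_nhdsGT one_pos] with r hr
    exact EReal.coe_nonneg.2 (log_measure_ball_div_log_nonneg ν hr)

lemma locUpper_nonneg (y : X) : 0 ≤ locUpper ν y :=
  (locLower_nonneg ν y).trans (liminf_le_limsup (by isBoundedDefault) (by isBoundedDefault))

/-- When `ν (ball y r) = 0` the ratio is the junk value `Real.log 0 / Real.log r = 0`. -/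
lemma ofReal_rpow_le_measure_ball (hr : r ∈ Ioo (0 : ℝ) 1) (hν : ν (ball y r) ≠ 0)
    (h : Real.log (ν (ball y r)).toReal / Real.log r < t) :
    ENNReal.ofReal (r ^ t) ≤ ν (ball y r) :=
  ENNReal.ofReal_le_of_le_toReal ((log_div_log_lt_iff
    (ENNReal.toReal_pos hν (measure_ne_top ν _)) hr).1 h).le

lemma measure_ball_lt_ofReal_rpow (hr : r ∈ Ioo (0 : ℝ) 1) (ht : 0 ≤ t)
    (h : t < Real.log (ν (ball y r)).toReal / Real.log r) :
    ν (ball y r) < ENNReal.ofReal (r ^ t) := by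
  have hm : 0 < (ν (ball y r)).toReal := ENNReal.toReal_nonneg.lt_of_ne fun h0 => by
    rw [← h0, Real.log_zero, zero_div] at h
    exact ht.not_gt h
  exact (ENNReal.lt_ofReal_iff_toReal_lt (measure_ne_top ν _)).2
    ((lt_log_div_log_iff hm hr).1 h)

lemma eventually_ofReal_rpow_le_measure_ball (hy : ∀ r, 0 < r → ν (ball y r) ≠ 0)
    (h : locUpper ν y < t) :
    ∀ᶠ r in 𝓝[>] (0 : ℝ), ENNReal.ofReal (r ^ t) ≤ ν (ball y r) := by
  filter_upwards [eventually_lt_of_limsup_lt h, Ioo_mem_nhdsGT one_pos] with r hrt hr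
  exact ofReal_rpow_le_measure_ball ν hr (hy r hr.1) (EReal.coe_lt_coe_iff.1 hrt)

lemma frequently_ofReal_rpow_le_measure_ball (hy : ∀ r, 0 < r → ν (ball y r) ≠ 0)
    (h : locLower ν y < t) :
    ∃ᶠ r in 𝓝[>] (0 : ℝ), ENNReal.ofReal (r ^ t) ≤ ν (ball y r) :=
  ((frequently_lt_of_liminf_lt (by isBoundedDefault) h).and_eventually
    (Ioo_mem_nhdsGT one_pos)).mono fun r ⟨hrt, hr⟩ =>
      ofReal_rpow_le_measure_ball ν hr (hy r hr.1) (EReal.coe_lt_coe_iff.1 hrt)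

lemma frequently_measure_ball_lt_ofReal_rpow (ht : 0 ≤ t) (h : t < locUpper ν y) :
    ∃ᶠ r in 𝓝[>] (0 : ℝ), ν (ball y r) < ENNReal.ofReal (r ^ t) :=
  ((frequently_lt_of_lt_limsup (by isBoundedDefault) h).and_eventually
    (Ioo_mem_nhdsGT one_pos)).mono fun r ⟨hrt, hr⟩ =>
      measure_ball_lt_ofReal_rpow ν hr ht (EReal.coe_lt_coe_iff.1 hrt)

lemma eventually_measure_ball_lt_ofReal_rpow (ht : 0 ≤ t) (h : t < locLower ν y) :
    ∀ᶠ r in 𝓝[>] (0 : ℝ), ν (ball y r) < ENNReal.ofReal (r ^ t) := by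
  filter_upwards [eventually_lt_of_lt_liminf h, Ioo_mem_nhdsGT one_pos] with r hrt hr
  exact measure_ball_lt_ofReal_rpow ν hr ht (EReal.coe_lt_coe_iff.1 hrt)

end LocalDimension

lemma ae_measure_ball_ne_zero [TopologicalSpace.SeparableSpace X] :
    ∀ᵐ y ∂ν, ∀ r, 0 < r → ν (ball y r) ≠ 0 := by
  have : SecondCountableTopology X := UniformSpace.secondCountable_of_separable X
  filter_upwards [Measure.support_mem_ae] with y hy r hr
  exact ((Measure.mem_support_iff_forall y).1 hy _ (ball_mem_nhds y hr)).ne'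

lemma measure_le_mul_hContent {A : Set X} {t η : ℝ}
    (hA : ∀ y ∈ A, ∀ r, 0 < r → r ≤ 2 * η → ν (ball y r) ≤ ENNReal.ofReal (r ^ t)) :
    ν A ≤ ENNReal.ofReal (2 ^ t) * hContent t η A := by
  rw [← ENNReal.div_le_iff' (ofReal_rpow_ne_zero two_pos t) ENNReal.ofReal_ne_top]
  refine le_hContent fun c r hr hcov => ENNReal.div_le_of_le_mul' ?_
  have hball : ∀ i, ν (A ∩ ball (c i) (r i)) ≤
      ENNReal.ofReal (2 ^ t) * ENNReal.ofReal (r i ^ t) := fun i => by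
    rcases (A ∩ ball (c i) (r i)).eq_empty_or_nonempty with he | ⟨y, hyA, hyc⟩
    · simp [he]
    · have hsub : A ∩ ball (c i) (r i) ⊆ ball y (2 * r i) := fun z ⟨_, hzc⟩ =>
        calc dist z y ≤ dist z (c i) + dist y (c i) := dist_triangle_right _ _ _
          _ < 2 * r i := by rw [mem_ball] at hzc hyc; linarith
      rw [← ofReal_mul_rpow zero_le_two (hr i).1.le]
      exact (measure_mono hsub).trans
        (hA y hyA _ (by linarith [(hr i).1]) (by linarith [(hr i).2]))
  calc ν A ≤ ν (⋃ i, A ∩ ball (c i) (r i)) := by rw [← inter_iUnion, inter_eq_left.2 hcov]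
    _ ≤ ∑' i, ν (A ∩ ball (c i) (r i)) := measure_iUnion_le _
    _ ≤ ∑' i, ENNReal.ofReal (2 ^ t) * ENNReal.ofReal (r i ^ t) :=
        ENNReal.tsum_le_tsum hball
    _ = _ := ENNReal.tsum_mul_left

lemma measure_eq_zero_of_hMeasure_eq_zero {A : Set X} {t : ℝ}
    (hA : ∀ y ∈ A, ∀ᶠ r in 𝓝[>] (0 : ℝ), ν (ball y r) ≤ ENNReal.ofReal (r ^ t))
    (h0 : hMeasure t A = 0) : ν A = 0 := by
  set An : ℕ → Set X := fun n =>
    {y ∈ A | ∀ r : ℝ, 0 < r → r ≤ 2 * (1 / ((n : ℝ) + 1)) →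
      ν (ball y r) ≤ ENNReal.ofReal (r ^ t)}
  have hcov : A ⊆ ⋃ n, An n := fun y hy => by
    obtain ⟨u, hu, hsub⟩ := mem_nhdsGT_iff_exists_Ioo_subset.1 (hA y hy)
    obtain ⟨n, hn⟩ := exists_nat_one_div_lt (half_pos (show (0 : ℝ) < u from hu))
    exact mem_iUnion.2 ⟨n, hy, fun r hr0 hr => hsub ⟨hr0, by linarith⟩⟩
  refine measure_mono_null hcov (measure_iUnion_null fun n => nonpos_iff_eq_zero.1 ?_)
  calc ν (An n) ≤ ENNReal.ofReal (2 ^ t) * hContent t (1 / (n + 1)) (An n) :=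
        measure_le_mul_hContent ν fun y hy => hy.2
    _ ≤ ENNReal.ofReal (2 ^ t) * hMeasure t A := by
        gcongr
        exact (hContent_le_hMeasure t Nat.one_div_pos_of_nat _).trans
          (hMeasure_mono fun y hy => hy.1)
    _ = 0 := by rw [h0, mul_zero]

lemma le_hDim_of_measure_pos [IsProbabilityMeasure ν] {t : ℝ} {B : Set X}
    (h : 0 < ν {y ∈ B | (t : EReal) < locLower ν y}) : (t : EReal) ≤ hDim B := by
  rw [hDim_eq_critExp]
  refine le_critExp fun α hα0 hαB => ?_
  by_contra! hαt
  refine h.ne' (measure_eq_zero_of_hMeasure_eq_zero ν (fun y hy => ?_)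
    ((hMeasure_mono (sep_subset B _)).trans_eq hαB |> nonpos_iff_eq_zero.1))
  exact (eventually_measure_ball_lt_ofReal_rpow ν hα0
    ((EReal.coe_lt_coe_iff.2 hαt).trans hy.2)).mono fun _ => le_of_lt

lemma isClosed_setOf_le_measure_closedBall [OpensMeasurableSpace X] [IsFiniteMeasure ν]
    (q : ℝ) (c : ℝ≥0∞) : IsClosed {y | c ≤ ν (closedBall y q)} := by
  refine isOpen_compl_iff.1 (isOpen_iff_mem_nhds.2 fun y hy => ?_)
  have hlim : Tendsto (fun r => ν (closedBall y r)) (𝓝[>] q) (𝓝 (ν (closedBall y q))) := by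
    simpa only [biInter_gt_closedBall, Function.comp_def] using
      tendsto_measure_biInter_gt (μ := ν) (s := closedBall y)
        (fun r _ => measurableSet_closedBall.nullMeasurableSet)
        (fun _ _ _ hij => closedBall_subset_closedBall hij)
        ⟨q + 1, by linarith, measure_ne_top ν _⟩
  obtain ⟨r, hr, hqr⟩ :=
    ((hlim.eventually (gt_mem_nhds (not_le.1 hy))).and self_mem_nhdsWithin).exists
  refine mem_of_superset (ball_mem_nhds y (sub_pos.2 hqr)) fun z hz =>
    not_le.2 ((measure_mono (closedBall_subset_closedBall' ?_)).trans_lt hr)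
  rw [mem_ball] at hz
  linarith

/- Radii are restricted to rationals, and balls are closed, so that the two sets below are
Borel: each `{y | ENNReal.ofReal (q ^ t) ≤ ν (closedBall y q)}` is closed. -/
def uniformMassSet (t : ℝ) (n : ℕ) : Set X :=
  ⋂ (q : ℚ) (_ : 0 < (q : ℝ)) (_ : (q : ℝ) ≤ 1 / (n + 1)),
    {y | ENNReal.ofReal ((q : ℝ) ^ t) ≤ ν (closedBall y q)}

def frequentMassSet (t : ℝ) : Set X :=
  ⋂ n : ℕ, ⋃ (q : ℚ) (_ : 0 < (q : ℝ)) (_ : (q : ℝ) ≤ 1 / (n + 1)),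
    {y | ENNReal.ofReal ((q : ℝ) ^ t) ≤ ν (closedBall y q)}

variable {ν} in
lemma mem_uniformMassSet {t : ℝ} {n : ℕ} {y : X} :
    y ∈ uniformMassSet ν t n ↔ ∀ q : ℚ, 0 < (q : ℝ) → (q : ℝ) ≤ 1 / (n + 1) →
      ENNReal.ofReal ((q : ℝ) ^ t) ≤ ν (closedBall y q) := by
  simp [uniformMassSet]

variable {ν} in
lemma mem_frequentMassSet {t : ℝ} {y : X} :
    y ∈ frequentMassSet ν t ↔ ∀ n : ℕ, ∃ q : ℚ, 0 < (q : ℝ) ∧ (q : ℝ) ≤ 1 / (n + 1) ∧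
      ENNReal.ofReal ((q : ℝ) ^ t) ≤ ν (closedBall y q) := by
  simp only [frequentMassSet, mem_iInter, mem_iUnion, mem_ofPred_eq, exists_prop]

section Measurability

variable [OpensMeasurableSpace X] [IsFiniteMeasure ν]

lemma measurableSet_uniformMassSet (t : ℝ) (n : ℕ) : MeasurableSet (uniformMassSet ν t n) :=
  .iInter fun _ => .iInter fun _ => .iInter fun _ =>
    (isClosed_setOf_le_measure_closedBall ν _ _).measurableSet

lemma measurableSet_frequentMassSet (t : ℝ) : MeasurableSet (frequentMassSet ν t) :=
  .iInter fun _ => .iUnion fun _ => .iUnion fun _ => .iUnion fun _ =>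
    (isClosed_setOf_le_measure_closedBall ν _ _).measurableSet

end Measurability

lemma mem_iUnion_uniformMassSet [IsProbabilityMeasure ν] {t : ℝ} {y : X}
    (hy : ∀ r, 0 < r → ν (ball y r) ≠ 0) (h : locUpper ν y < t) :
    y ∈ ⋃ n, uniformMassSet ν t n := by
  obtain ⟨u, hu, hsub⟩ :=
    mem_nhdsGT_iff_exists_Ioo_subset.1 (eventually_ofReal_rpow_le_measure_ball ν hy h)
  obtain ⟨n, hn⟩ := exists_nat_one_div_lt (show (0 : ℝ) < u from hu)
  exact mem_iUnion.2 ⟨n, mem_uniformMassSet.2 fun q hq0 hqn =>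
    (hsub ⟨hq0, hqn.trans_lt hn⟩).trans (measure_mono ball_subset_closedBall)⟩

lemma mem_frequentMassSet_of_locLower_lt [IsProbabilityMeasure ν] {t t' : ℝ} (ht' : 0 < t')
    (htt' : t' < t) {y : X} (hy : ∀ r, 0 < r → ν (ball y r) ≠ 0) (h : locLower ν y < t') :
    y ∈ frequentMassSet ν t := by
  have ht : 0 < t := ht'.trans htt'
  set β := t' / t
  -- a rational `q ∈ (r, r ^ β)` has `q ^ t ≤ r ^ t'` and `ball y r ⊆ closedBall y q`
  have hβ : β ∈ Ioo (0 : ℝ) 1 := ⟨div_pos ht' ht, (div_lt_one ht).2 htt'⟩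
  refine mem_frequentMassSet.2 fun n => ?_
  have hsmall : (0 : ℝ) < min 1 ((1 / ((n : ℝ) + 1)) ^ β⁻¹) :=
    lt_min one_pos (Real.rpow_pos_of_pos (Nat.one_div_pos_of_nat (n := n)) _)
  obtain ⟨r, hr, hr0, hrlt⟩ := ((frequently_ofReal_rpow_le_measure_ball ν hy h).and_eventually
    (Ioo_mem_nhdsGT hsmall)).exists
  have hr1 : r < 1 := hrlt.trans_le (min_le_left _ _)
  have hrβ : r < r ^ β := by
    simpa using Real.rpow_lt_rpow_of_exponent_gt hr0 hr1 hβ.2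
  have hrβn : r ^ β ≤ 1 / (n + 1) := by
    have := Real.rpow_le_rpow hr0.le (hrlt.trans_le (min_le_right _ _)).le hβ.1.le
    rwa [← Real.rpow_mul Nat.one_div_pos_of_nat.le, inv_mul_cancel₀ hβ.1.ne',
      Real.rpow_one] at this
  obtain ⟨q, hrq, hqβ⟩ := exists_rat_btwn hrβ
  have hq0 : 0 < (q : ℝ) := hr0.trans hrq
  refine ⟨q, hq0, hqβ.le.trans hrβn, ?_⟩
  have hqt : (q : ℝ) ^ t ≤ r ^ t' := by
    have := Real.rpow_le_rpow hq0.le hqβ.le ht.le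
    rwa [← Real.rpow_mul hr0.le, div_mul_cancel₀ _ ht.ne'] at this
  calc ENNReal.ofReal ((q : ℝ) ^ t) ≤ ENNReal.ofReal (r ^ t') := ENNReal.ofReal_le_ofReal hqt
    _ ≤ ν (ball y r) := hr
    _ ≤ ν (closedBall y q) :=
        measure_mono ((ball_subset_ball hrq.le).trans ball_subset_closedBall)

section Separable

variable [TopologicalSpace.SeparableSpace X]

lemma measure_le_mul_packPre {A : Set X} {t : ℝ}
    (hA : ∀ y ∈ A, ∃ᶠ r in 𝓝[>] (0 : ℝ), ν (ball y r) < ENNReal.ofReal (r ^ t)) :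
    ν A ≤ ENNReal.ofReal (5 ^ t) * packPre t A := by
  rcases A.eq_empty_or_nonempty with rfl | ⟨x, -⟩
  · simp
  have : Nonempty X := ⟨x⟩
  rw [← ENNReal.div_le_iff' (ofReal_rpow_ne_zero (by norm_num) t) ENNReal.ofReal_ne_top]
  refine le_packPre fun η hη => ?_
  have hsmall : ∀ y ∈ A, ∃ ρ, 0 < ρ ∧ ρ ≤ η ∧
      ν (closedBall y (4 * ρ)) ≤ ENNReal.ofReal ((5 * ρ) ^ t) := fun y hy => by
    obtain ⟨r, hr, hr0, hrη⟩ :=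
      ((hA y hy).and_eventually (Ioo_mem_nhdsGT (by positivity : (0 : ℝ) < 5 * η))).exists
    refine ⟨r / 5, by positivity, by linarith, ?_⟩
    rw [mul_div_cancel₀ r (by norm_num)]
    exact (measure_mono (closedBall_subset_ball (by linarith))).trans hr.le
  obtain ⟨I, c, ρ, hP, hdisj, hcov⟩ := exists_disjoint_closedBall_cover _ hsmall
  refine ⟨I, c, ρ, fun i hi => ⟨(hP i hi).1, (hP i hi).2.1, (hP i hi).2.2.1⟩,
    hdisj.mono fun _ => ball_subset_closedBall, ENNReal.div_le_of_le_mul' ?_⟩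
  calc ν A ≤ ∑' i : I, ν (closedBall (c i) (4 * ρ i)) :=
        (measure_mono hcov).trans (measure_biUnion_le ν I.to_countable _)
    _ ≤ ∑' i : I, ENNReal.ofReal (5 ^ t) * ENNReal.ofReal (ρ i ^ t) :=
        ENNReal.tsum_le_tsum fun ⟨i, hi⟩ => by
          rw [← ofReal_mul_rpow (by norm_num) (hP i hi).2.1.le]
          exact (hP i hi).2.2.2
    _ = _ := ENNReal.tsum_mul_left

lemma measure_le_mul_packMeasure {A : Set X} {t : ℝ}
    (hA : ∀ y ∈ A, ∃ᶠ r in 𝓝[>] (0 : ℝ), ν (ball y r) < ENNReal.ofReal (r ^ t)) :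
    ν A ≤ ENNReal.ofReal (5 ^ t) * packMeasure t A := by
  rw [← ENNReal.div_le_iff' (ofReal_rpow_ne_zero (by norm_num) t) ENNReal.ofReal_ne_top]
  refine le_packMeasure fun C hC => ENNReal.div_le_of_le_mul' ?_
  calc ν A = ν (⋃ k, C k ∩ A) := by rw [← iUnion_inter, inter_eq_right.2 hC]
    _ ≤ ∑' k, ν (C k ∩ A) := measure_iUnion_le _
    _ ≤ ∑' k, ENNReal.ofReal (5 ^ t) * packPre t (C k) := ENNReal.tsum_le_tsum fun k =>
        (measure_le_mul_packPre ν fun y hy => hA y hy.2).trans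
          (mul_le_mul' le_rfl (packPre_mono inter_subset_left))
    _ = _ := ENNReal.tsum_mul_left

lemma le_packDim_of_measure_pos [IsProbabilityMeasure ν] {t : ℝ} {B : Set X}
    (h : 0 < ν {y ∈ B | (t : EReal) < locUpper ν y}) : (t : EReal) ≤ packDim B := by
  rw [packDim_eq_critExp]
  refine le_critExp fun α hα0 hαB => ?_
  by_contra! hαt
  refine h.ne' (nonpos_iff_eq_zero.1 ?_)
  calc ν {y ∈ B | (t : EReal) < locUpper ν y}
      ≤ ENNReal.ofReal (5 ^ α) * packMeasure α {y ∈ B | (t : EReal) < locUpper ν y} :=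
        measure_le_mul_packMeasure ν fun y hy => frequently_measure_ball_lt_ofReal_rpow ν hα0
          ((EReal.coe_lt_coe_iff.2 hαt).trans hy.2)
    _ ≤ ENNReal.ofReal (5 ^ α) * packMeasure α B := by
        gcongr
        exact packMeasure_mono (sep_subset B _)
    _ = 0 := by rw [hαB, mul_zero]

end Separable

variable [OpensMeasurableSpace X] [IsProbabilityMeasure ν] {t δ : ℝ}

lemma packPre_uniformMassSet_eq_zero (ht : 0 ≤ t) (hδ : 0 < δ) (n : ℕ) :
    packPre (t + δ) (uniformMassSet ν t n) = 0 := by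
  refine eq_zero_of_eventually_le_mul_rpow (C := ENNReal.ofReal (2 ^ t)) ENNReal.ofReal_ne_top
    hδ ?_
  filter_upwards [Ioo_mem_nhdsGT (Nat.one_div_pos_of_nat (n := n))] with η hη
  refine packPre_le hη.1 fun I c r hr hd => ?_
  have hmass : ∀ i ∈ I, ENNReal.ofReal (r i ^ t) ≤
      ENNReal.ofReal (2 ^ t) * ν (ball (c i) (r i)) := fun i hi => by
    obtain ⟨hc, hr0, hrη⟩ := hr i hi
    obtain ⟨q, hrq, hqr⟩ := exists_rat_btwn (half_lt_self hr0)
    have hq0 : 0 < (q : ℝ) := (half_pos hr0).trans hrq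
    calc ENNReal.ofReal (r i ^ t) ≤ ENNReal.ofReal ((2 * q) ^ t) :=
          ENNReal.ofReal_le_ofReal (Real.rpow_le_rpow hr0.le (by linarith) ht)
      _ = ENNReal.ofReal (2 ^ t) * ENNReal.ofReal ((q : ℝ) ^ t) :=
          ofReal_mul_rpow zero_le_two hq0.le t
      _ ≤ ENNReal.ofReal (2 ^ t) * ν (ball (c i) (r i)) := by
          gcongr
          exact (mem_uniformMassSet.1 hc q hq0 (by linarith [hη.2])).trans
            (measure_mono (closedBall_subset_ball hqr))
  simpa using tsum_ofReal_rpow_le ν (fun _ => measurableSet_ball) hd hδ.le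
    (fun i hi => (hr i hi).2) hmass

lemma packMeasure_iUnion_uniformMassSet_eq_zero (ht : 0 ≤ t) (hδ : 0 < δ) :
    packMeasure (t + δ) (⋃ n, uniformMassSet ν t n) = 0 :=
  nonpos_iff_eq_zero.1 <| (packMeasure_le _ _ subset_rfl).trans_eq <| by
    simp [packPre_uniformMassSet_eq_zero ν ht hδ]

variable [TopologicalSpace.SeparableSpace X]

lemma exists_packDim_le (t : ℝ) (ht : 0 < t) :
    ∃ E, MeasurableSet E ∧ packDim E ≤ t ∧ ∀ᵐ y ∂ν, locUpper ν y < t → y ∈ E :=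
  ⟨⋃ n, uniformMassSet ν t n, .iUnion (measurableSet_uniformMassSet ν t),
    (packDim_eq_critExp _).trans_le <| critExp_le ht.le fun s hs => by
      simpa using packMeasure_iUnion_uniformMassSet_eq_zero ν ht.le (sub_pos.2 hs),
    by filter_upwards [ae_measure_ball_ne_zero ν] with y hy h
       using mem_iUnion_uniformMassSet ν hy h⟩

lemma hContent_frequentMassSet_le (ht : 0 ≤ t) (hδ : 0 < δ) {η : ℝ} (hη : 0 < η) :
    hContent (t + δ) η (frequentMassSet ν t) ≤
      ENNReal.ofReal (5 ^ t) * ENNReal.ofReal (η ^ δ) := by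
  have : Nonempty X := nonempty_of_isProbabilityMeasure ν
  refine ENNReal.le_of_forall_pos_le_add fun ε hε _ => ?_
  have hsmall : ∀ y ∈ frequentMassSet ν t, ∃ ρ, 0 < ρ ∧ ρ ≤ η / 5 ∧
      ENNReal.ofReal (ρ ^ t) ≤ ν (closedBall y ρ) := fun y hy => by
    obtain ⟨n, hn⟩ := exists_nat_one_div_lt (by positivity : 0 < η / 5)
    obtain ⟨q, hq0, hqn, hq⟩ := mem_frequentMassSet.1 hy n
    exact ⟨q, hq0, hqn.trans hn.le, hq⟩
  obtain ⟨I, c, ρ, hP, hdisj, hcov⟩ := exists_disjoint_closedBall_cover _ hsmall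
  have hr : ∀ i ∈ I, 0 < 5 * ρ i ∧ 5 * ρ i ≤ η := fun i hi =>
    ⟨by linarith [(hP i hi).2.1], by linarith [(hP i hi).2.2.1]⟩
  have hcov' : frequentMassSet ν t ⊆ ⋃ i ∈ I, ball (c i) (5 * ρ i) :=
    hcov.trans <| iUnion₂_mono fun i hi => closedBall_subset_ball (by linarith [(hP i hi).2.1])
  have hmass : ∀ i ∈ I, ENNReal.ofReal ((5 * ρ i) ^ t) ≤
      ENNReal.ofReal (5 ^ t) * ν (closedBall (c i) (ρ i)) := fun i hi => by
    rw [ofReal_mul_rpow (by norm_num) (hP i hi).2.1.le]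
    exact mul_le_mul' le_rfl (hP i hi).2.2.2
  calc hContent (t + δ) η (frequentMassSet ν t)
      ≤ ∑' i : I, ENNReal.ofReal ((5 * ρ i) ^ (t + δ)) + ENNReal.ofReal ε :=
        hContent_le_tsum_add (by positivity) hη hε c _ hr hcov'
    _ ≤ ENNReal.ofReal (5 ^ t) * ENNReal.ofReal (η ^ δ) + ε := by
        rw [ENNReal.ofReal_coe_nnreal]
        gcongr
        simpa using
          tsum_ofReal_rpow_le ν (fun _ => measurableSet_closedBall) hdisj hδ.le hr hmass

lemma hMeasure_frequentMassSet_eq_zero (ht : 0 ≤ t) (hδ : 0 < δ) :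
    hMeasure (t + δ) (frequentMassSet ν t) = 0 :=
  nonpos_iff_eq_zero.1 <| iSup₂_le fun η' hη' =>
    (eq_zero_of_eventually_le_mul_rpow ENNReal.ofReal_ne_top hδ <| by
      filter_upwards [Ioo_mem_nhdsGT hη'] with η hη
      exact (hContent_anti hη.2.le _).trans (hContent_frequentMassSet_le ν ht hδ hη.1)).le

lemma exists_hDim_le (t : ℝ) (ht : 0 < t) :
    ∃ E, MeasurableSet E ∧ hDim E ≤ t ∧ ∀ᵐ y ∂ν, locLower ν y < t → y ∈ E :=
  ⟨frequentMassSet ν t, measurableSet_frequentMassSet ν t,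
    (hDim_eq_critExp _).trans_le <| critExp_le ht.le fun s hs => by
      simpa using hMeasure_frequentMassSet_eq_zero ν ht.le (sub_pos.2 hs),
    by
      filter_upwards [ae_measure_ball_ne_zero ν] with y hy h
      obtain ⟨t', hyt', ht't⟩ := EReal.lt_iff_exists_real_btwn.1 h
      exact mem_frequentMassSet_of_locLower_lt ν
        (EReal.coe_pos.1 ((locLower_nonneg ν y).trans_lt hyt')) (EReal.coe_lt_coe_iff.1 ht't)
        hy hyt'⟩

end MeasureBounds

end Paper

open Paper in
/-- For a separable metric space `X` and a Borel probability measure `ν` on `X`: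
the upper (resp. lower) packing dimension of `ν`, i.e. the essential supremum (resp. infimum) of
the upper local dimension, equals the infimum of the packing dimensions of Borel sets of full
(resp. positive) measure; and the upper (resp. lower) Hausdorff dimension of `ν`, i.e. the
essential supremum (resp. infimum) of the lower local dimension, equals the infimum of the
Hausdorff dimensions of Borel sets of full (resp. positive) measure. -/
theorem statement_5 {X : Type*} [MetricSpace X] [TopologicalSpace.SeparableSpace X]
    [MeasurableSpace X] [BorelSpace X] (ν : Measure X) [IsProbabilityMeasure ν] :
    (essSup (locUpper ν) ν = ⨅ (B : Set X) (_ : MeasurableSet B) (_ : ν B = 1), packDim B) ∧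
    (essInf (locUpper ν) ν = ⨅ (B : Set X) (_ : MeasurableSet B) (_ : 0 < ν B), packDim B) ∧
    (essSup (locLower ν) ν = ⨅ (B : Set X) (_ : MeasurableSet B) (_ : ν B = 1), hDim B) ∧
    (essInf (locLower ν) ν = ⨅ (B : Set X) (_ : MeasurableSet B) (_ : 0 < ν B), hDim B) :=
  ⟨essSup_eq_iInf_of_measure_eq_one (locUpper_nonneg ν)
      (fun _ _ => le_packDim_of_measure_pos ν) (exists_packDim_le ν),
    essInf_eq_iInf_of_measure_pos (locUpper_nonneg ν) (fun _ _ => le_packDim_of_measure_pos ν)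
      (exists_packDim_le ν),
    essSup_eq_iInf_of_measure_eq_one (locLower_nonneg ν) (fun _ _ => le_hDim_of_measure_pos ν)
      (exists_hDim_le ν),
    essInf_eq_iInf_of_measure_pos (locLower_nonneg ν) (fun _ _ => le_hDim_of_measure_pos ν)
      (exists_hDim_le ν)⟩
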